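/- arXiv:2010.09093 — 10 statements merged into one kernel-verified Lean document; each statement's English description precedes it below -/
import Mathlib

section
/- Let t_1,...,t_n be nonzero complex numbers and for each pair i≠j let E_{ij} be the n×n matrix equal to the identity except that the i-th row has entry t_j^{-1} in position (i,i) and entry t_j^{-1}(t_i−1) in position (i,j). Then the column vector v = (t_1−1, t_2−1, ..., t_n−1)^T satisfies E_{ij} v = v for all i≠j. -/
open Matrix

/-- The image of the generator `ε i j` under Bardakov's extension of the Gassner
representation, specialized at complex parameters `t`. -/
noncomputable def gassnerExt (n : ℕ) (t : Fin n → ℂ) (i j : Fin n) :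
    Matrix (Fin n) (Fin n) ℂ :=
  Matrix.of fun r c =>
    if r = i ∧ c = i then (t j)⁻¹
    else if r = i ∧ c = j then (t j)⁻¹ * (t i - 1)
    else if r = c then 1 else 0

theorem stmt0 (n : ℕ) (t : Fin n → ℂ) (ht : ∀ k, t k ≠ 0)
    (i j : Fin n) (hij : i ≠ j) :
    (gassnerExt n t i j).mulVec (fun k => t k - 1) = fun k => t k - 1 := by
  funext k
  simp only [mulVec, dotProduct, gassnerExt, of_apply]
  by_cases hk : k = i
  · subst hk
    rw [Fintype.sum_eq_add_sum_compl k]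
    have : ∀ c ∈ ({k}ᶜ : Finset (Fin n)),
        (if k = k ∧ c = k then (t j)⁻¹
         else if k = k ∧ c = j then (t j)⁻¹ * (t k - 1)
         else if k = c then 1 else 0) * (t c - 1) =
        if c = j then (t j)⁻¹ * (t k - 1) * (t c - 1) else 0 := by
      intro c hc
      simp only [Finset.mem_compl, Finset.mem_singleton] at hc
      by_cases h : c = j <;> simp [hc, Ne.symm hc, h, Ne.symm hij]
    rw [Finset.sum_congr rfl this, Finset.sum_ite_eq' ({k}ᶜ : Finset (Fin n)) j]
    have hj : j ∈ ({k}ᶜ : Finset (Fin n)) := by simp [Ne.symm hij]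
    simp [hj, hij]
    field_simp
    rw [div_eq_iff (ht j)]
    ring
  · have : ∀ c, (if k = i ∧ c = i then (t j)⁻¹
         else if k = i ∧ c = j then (t j)⁻¹ * (t i - 1)
         else if k = c then 1 else 0) * (t c - 1) =
        if c = k then (t c - 1) else 0 := by
      intro c
      simp only [hk, false_and, if_false]
      by_cases h : k = c <;> simp [h, eq_comm]
    simp [this]
end

section
/- Let n ≥ 2 and let t_1,...,t_n be nonzero complex numbers. Define matrices E_{ij} ∈ GL_n(C) for i≠j as the identity except that row i has entry t_j^{-1} at position (i,i) and entry t_j^{-1}(t_i−1) at position (i,j). Then the subgroup of GL_n(C) generated by the E_{ij} has a nonzero proper invariant subspace of C^n; that is, the representation ρ̂_G is reducible. -/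
open Matrix

lemma gassner_mulVec (n : ℕ) (t : Fin n → ℂ) (i j : Fin n) (hij : i ≠ j)
    (v : Fin n → ℂ) :
    (gassnerExt n t i j).mulVec v =
      fun r => if r = i then (t j)⁻¹ * v i + (t j)⁻¹ * (t i - 1) * v j else v r := by
  funext r
  simp only [mulVec, dotProduct, gassnerExt, of_apply]
  by_cases hr : r = i
  · subst hr
    simp only [if_pos rfl, true_and]
    have key : ∀ c : Fin n,
        (if c = r then (t j)⁻¹ else if c = j then (t j)⁻¹ * (t r - 1)
          else if r = c then (1:ℂ) else 0) * v c
        = (if c = r then (t j)⁻¹ * v r else 0)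
          + (if c = j then (t j)⁻¹ * (t r - 1) * v j else 0) := by
      intro c
      by_cases h1 : c = r
      · subst h1; simp [hij]
      · by_cases h2 : c = j
        · subst h2; simp [h1]
        · simp only [if_neg h1, if_neg h2, zero_mul, if_neg (fun h : r = c => h1 h.symm), add_zero]
    rw [Finset.sum_congr rfl fun c _ => key c, Finset.sum_add_distrib,
      Finset.sum_ite_eq', Finset.sum_ite_eq']
    simp
  · have key : ∀ c : Fin n,
        (if r = i ∧ c = i then (t j)⁻¹ else if r = i ∧ c = j then (t j)⁻¹ * (t i - 1)
          else if r = c then (1:ℂ) else 0) * v c = (if c = r then v c else 0) := by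
      intro c
      by_cases h : r = c
      · subst h; simp [hr]
      · rw [if_neg h, if_neg (fun hc : c = r => h hc.symm)]
        simp [hr, h]
    rw [Finset.sum_congr rfl fun c _ => key c, Finset.sum_ite_eq']
    simp [hr]

lemma span_singleton_ne_top {n : ℕ} (hn : 2 ≤ n) (v : Fin n → ℂ) :
    Submodule.span ℂ {v} ≠ ⊤ := by
  intro h
  have h1 : Module.finrank ℂ (Fin n → ℂ) = n := Module.finrank_fin_fun ℂ
  have h2 : Module.finrank ℂ (Submodule.span ℂ {v}) ≤ 1 := by
    have := finrank_span_le_card (R := ℂ) ({v} : Set (Fin n → ℂ))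
    simpa using this
  rw [h, finrank_top, h1] at h2
  omega

theorem stmt1 (n : ℕ) (hn : 2 ≤ n) (t : Fin n → ℂ) (ht : ∀ k, t k ≠ 0) :
    ∃ S : Submodule ℂ (Fin n → ℂ), S ≠ ⊥ ∧ S ≠ ⊤ ∧
      ∀ i j : Fin n, i ≠ j → ∀ x ∈ S, (gassnerExt n t i j).mulVec x ∈ S := by
  by_cases hw : ∀ k, t k = 1
  · -- all matrices are the identity
    set v : Fin n → ℂ := Pi.single (⟨0, by omega⟩ : Fin n) (1 : ℂ) with hv
    refine ⟨Submodule.span ℂ {v}, ?_, span_singleton_ne_top hn v, ?_⟩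
    · rw [Ne, Submodule.span_singleton_eq_bot]
      intro h
      have := congrFun h ⟨0, by omega⟩
      simp [hv] at this
    · intro i j hij x hx
      rw [gassner_mulVec n t i j hij]
      have : (fun r => if r = i then (t j)⁻¹ * x i + (t j)⁻¹ * (t i - 1) * x j else x r)
          = x := by
        funext r
        by_cases hr : r = i
        · subst hr; simp [hw r, hw j]
        · simp [hr]
      rwa [this]
  · push_neg at hw
    obtain ⟨k0, hk0⟩ := hw
    set w : Fin n → ℂ := fun k => t k - 1 with hwdef
    refine ⟨Submodule.span ℂ {w}, ?_, span_singleton_ne_top hn w, ?_⟩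
    · rw [Ne, Submodule.span_singleton_eq_bot]
      intro h
      have := congrFun h k0
      simp only [hwdef, Pi.zero_apply, sub_eq_zero] at this
      exact hk0 this
    · intro i j hij x hx
      rw [Submodule.mem_span_singleton] at hx
      obtain ⟨c, rfl⟩ := hx
      rw [gassner_mulVec n t i j hij]
      refine Submodule.mem_span_singleton.2 ⟨c, ?_⟩
      funext r
      by_cases hr : r = i
      · subst hr
        simp only [hwdef, Pi.smul_apply, smul_eq_mul]
        have key : (t j)⁻¹ * (c * (t r - 1)) + (t j)⁻¹ * (t r - 1) * (c * (t j - 1))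
            = (t j)⁻¹ * t j * (c * (t r - 1)) := by ring
        rw [key, inv_mul_cancel₀ (ht j), one_mul]
        simp
      · simp [hr]
end

section
/- Let n ≥ 2 and let t_1,...,t_n be nonzero complex numbers with t_i ≠ 1 for every 1 ≤ i ≤ n. Then the only subspaces of C^{n−1} invariant under all matrices φ̂_G(ε_{ij}) (1 ≤ i ≠ j ≤ n) are {0} and C^{n−1}; that is, φ̂_G is irreducible. -/
open Matrix

/-- The `(n-1)`-dimensional composition factor `φ̂_G` of Bardakov's extension of the
Gassner representation of `Cb_n`, at `n = d+1`, on the generator `ε i j`. -/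
noncomputable def phiG (d : ℕ) (t : Fin (d+1) → ℂ) (i j : Fin (d+1)) :
    Matrix (Fin d) (Fin d) ℂ :=
  if i = Fin.last d then
    Matrix.of fun r c =>
      if r.castSucc = j then
        (if c.castSucc = j then (t j)⁻¹ else -(t j)⁻¹ * (t c.castSucc - 1))
      else if r = c then 1 else 0
  else
    Matrix.of fun r c =>
      if r.castSucc = i ∧ c.castSucc = i then (t j)⁻¹
      else if r.castSucc = j ∧ c.castSucc = i then (t j)⁻¹ * (t i - 1)
      else if r = c then 1 else 0

private lemma phiG_last_mulVec (d : ℕ) (t : Fin (d+1) → ℂ) (i : Fin d) (x : Fin d → ℂ) :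
    (phiG d t i.castSucc (Fin.last d)).mulVec x
      = x + ((t (Fin.last d))⁻¹ - 1) • (Pi.single i (x i) : Fin d → ℂ) := by
  have hne : i.castSucc ≠ Fin.last d := (Fin.castSucc_lt_last i).ne
  funext r
  simp only [phiG, if_neg hne, Matrix.mulVec, dotProduct, Matrix.of_apply]
  by_cases hr : r = i
  · subst hr
    rw [Finset.sum_eq_single r]
    · simp [hne, Pi.single_eq_same]
      ring
    · intro b _ hb
      simp [hb, Ne.symm hb, hne]
    · simp
  · rw [Finset.sum_eq_single r]
    · simp [hr, (Fin.castSucc_lt_last r).ne, Pi.single_eq_of_ne hr]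
    · intro b _ hb
      simp [Fin.castSucc_inj, hr, (Fin.castSucc_lt_last r).ne, Ne.symm hb]
    · simp

private lemma phiG_col (d : ℕ) (t : Fin (d+1) → ℂ) (i j : Fin d) (hij : i ≠ j) :
    (phiG d t i.castSucc j.castSucc).mulVec (Pi.single i 1 : Fin d → ℂ)
      = (t j.castSucc)⁻¹ • (Pi.single i 1 : Fin d → ℂ)
        + ((t j.castSucc)⁻¹ * (t i.castSucc - 1)) • (Pi.single j 1 : Fin d → ℂ) := by
  have hne : i.castSucc ≠ Fin.last d := (Fin.castSucc_lt_last i).ne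
  funext r
  rw [Matrix.mulVec_single]
  simp only [phiG, if_neg hne, Matrix.of_apply, mul_one, Pi.add_apply, Pi.smul_apply,
    smul_eq_mul]
  by_cases hri : r = i
  · subst hri
    simp [Pi.single_eq_same, Pi.single_eq_of_ne hij]
  · by_cases hrj : r = j
    · subst hrj
      simp [Fin.castSucc_inj, Ne.symm hij, Pi.single_eq_same, Pi.single_eq_of_ne (Ne.symm hij)]
    · simp [Fin.castSucc_inj, hri, hrj, Pi.single_eq_of_ne hri, Pi.single_eq_of_ne hrj]

theorem stmt3 (d : ℕ) (hd : 1 ≤ d) (t : Fin (d+1) → ℂ) (ht : ∀ k, t k ≠ 0)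
    (ht1 : ∀ k, t k ≠ 1) :
    ∀ S : Submodule ℂ (Fin d → ℂ),
      (∀ i j : Fin (d+1), i ≠ j → ∀ x ∈ S, (phiG d t i j).mulVec x ∈ S) →
      S = ⊥ ∨ S = ⊤ := by
  intro S hS
  by_cases hbot : S = ⊥
  · exact Or.inl hbot
  right
  -- key constant nonzero
  have hc : (t (Fin.last d))⁻¹ - 1 ≠ 0 := by
    intro h
    apply ht1 (Fin.last d)
    have h2 : (t (Fin.last d))⁻¹ = 1 := by linear_combination h
    have := congrArg (fun z => t (Fin.last d) * z) h2
    simpa [mul_inv_cancel₀ (ht (Fin.last d))] using this.symm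
  -- step 1: coordinate projections stay in S
  have step1 : ∀ x ∈ S, ∀ i : Fin d, (Pi.single i (x i) : Fin d → ℂ) ∈ S := by
    intro x hx i
    have hne : i.castSucc ≠ Fin.last d := (Fin.castSucc_lt_last i).ne
    have hv : (phiG d t i.castSucc (Fin.last d)).mulVec x ∈ S := hS _ _ hne x hx
    rw [phiG_last_mulVec] at hv
    have h2 : ((t (Fin.last d))⁻¹ - 1) • (Pi.single i (x i) : Fin d → ℂ) ∈ S := by
      have := S.sub_mem hv hx
      simpa using this
    have := S.smul_mem ((t (Fin.last d))⁻¹ - 1)⁻¹ h2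
    rwa [smul_smul, inv_mul_cancel₀ hc, one_smul] at this
  -- there exists i with e_i ∈ S
  obtain ⟨x, hxS, hx0⟩ := Submodule.exists_mem_ne_zero_of_ne_bot hbot
  obtain ⟨i0, hi0⟩ : ∃ i, x i ≠ 0 := by
    by_contra h
    push_neg at h
    exact hx0 (funext h)
  have he0 : Pi.single i0 (1:ℂ) ∈ S := by
    have h1 := step1 x hxS i0
    have := S.smul_mem (x i0)⁻¹ h1
    rwa [← Pi.single_smul, smul_eq_mul, inv_mul_cancel₀ hi0] at this
  -- step 2 : all e_j ∈ S
  have step2 : ∀ j : Fin d, Pi.single j (1:ℂ) ∈ S := by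
    intro j
    by_cases hji : j = i0
    · subst hji; exact he0
    have hneq : i0.castSucc ≠ j.castSucc := by
      simp [Fin.castSucc_inj]; exact fun h => hji h.symm
    have hv : (phiG d t i0.castSucc j.castSucc).mulVec (Pi.single i0 1) ∈ S :=
      hS _ _ hneq _ he0
    rw [phiG_col d t i0 j (fun h => hji h.symm)] at hv
    have h2 : ((t j.castSucc)⁻¹ * (t i0.castSucc - 1)) • (Pi.single j (1:ℂ) : Fin d → ℂ) ∈ S := by
      have := S.sub_mem hv (S.smul_mem (t j.castSucc)⁻¹ he0)
      simpa using this
    have hc2 : (t j.castSucc)⁻¹ * (t i0.castSucc - 1) ≠ 0 := by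
      apply mul_ne_zero (inv_ne_zero (ht _))
      exact sub_ne_zero_of_ne (ht1 _)
    have := S.smul_mem ((t j.castSucc)⁻¹ * (t i0.castSucc - 1))⁻¹ h2
    rwa [smul_smul, inv_mul_cancel₀ hc2, one_smul] at this
  -- conclude
  rw [eq_top_iff]
  intro v _
  have : v = ∑ j : Fin d, Pi.single j (v j) := by
    exact (Finset.univ_sum_single v).symm
  rw [this]
  apply Submodule.sum_mem
  intro j _
  have : Pi.single j (v j) = (v j) • (Pi.single j (1:ℂ) : Fin d → ℂ) := by
    rw [← Pi.single_smul, smul_eq_mul, mul_one]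
  rw [this]
  exact S.smul_mem _ (step2 j)
end

section
/- Let t be a nonzero complex number and n ≥ 2. Consider the n×n matrices B_{ij} (i≠j) equal to the identity except that row i has entry t^{-1} at (i,i) and entry 1−t^{-1} at (i,j), together with the permutation matrices A_i (1 ≤ i ≤ n−1) swapping basis vectors e_i and e_{i+1}. Then the vector v = (1,1,...,1)^T is fixed by all B_{ij} and all A_i; in particular the representation ρ̂_B of C_n they generate is reducible. -/
open Matrix

/-- The image of `ε i j` under Bardakov's extension `ρ̂_B` of the Burau representation,
at complex parameter `t`. -/
noncomputable def burauExt (n : ℕ) (t : ℂ) (i j : Fin n) : Matrix (Fin n) (Fin n) ℂ :=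
  Matrix.of fun r c =>
    if r = i ∧ c = i then t⁻¹
    else if r = i ∧ c = j then 1 - t⁻¹
    else if r = c then 1 else 0

/-- The permutation matrix swapping the basis vectors `e i` and `e (i+1)` of `ℂ^(d+1)`,
the image of the transposition generator `α i` under `ρ̂_B`. -/
noncomputable def swapMat (d : ℕ) (i : Fin d) : Matrix (Fin (d+1)) (Fin (d+1)) ℂ :=
  Matrix.of fun r c =>
    if (r = i.castSucc ∧ c = i.succ) ∨ (r = i.succ ∧ c = i.castSucc) then 1
    else if r = c ∧ r ≠ i.castSucc ∧ r ≠ i.succ then 1 else 0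

/-!
Each `B_ij` has row sums `t⁻¹ + (1 - t⁻¹) = 1` and each `A_i` is a permutation matrix, so both fix
the all-ones vector; its span is then a nonzero invariant line, proper because `n ≥ 2`.
-/

theorem Matrix.mulVec_const_one_of_row_sum_eq_one {n R : Type*} [Fintype n] [NonAssocSemiring R]
    (M : Matrix n n R) (hM : ∀ r, ∑ c, M r c = 1) : M *ᵥ (fun _ => 1) = fun _ => 1 := by
  ext r
  simpa [mulVec, dotProduct] using hM r

theorem Submodule.mulVec_mem_span_singleton {n R : Type*} [Fintype n] [CommSemiring R]
    {M : Matrix n n R} {v : n → R} (hv : M *ᵥ v = v) {x : n → R} (hx : x ∈ R ∙ v) :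
    M *ᵥ x ∈ R ∙ v := by
  obtain ⟨a, rfl⟩ := Submodule.mem_span_singleton.mp hx
  rw [mulVec_smul, hv]
  exact Submodule.smul_mem _ a (Submodule.mem_span_singleton_self v)

theorem Submodule.span_singleton_ne_top_of_one_lt_finrank {K V : Type*} [DivisionRing K]
    [AddCommGroup V] [Module K V] (hV : 1 < Module.finrank K V) (v : V) : K ∙ v ≠ ⊤ := by
  intro h
  have := finrank_span_le_card (R := K) ({v} : Set V)
  rw [h, finrank_top] at this
  simp only [Set.toFinset_singleton, Finset.card_singleton] at this
  omega

section burauExt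

variable {n : ℕ} (t : ℂ) {i j : Fin n}

theorem burauExt_row_self (hij : i ≠ j) :
    burauExt n t i j i = Pi.single i t⁻¹ + Pi.single j (1 - t⁻¹) := by
  ext c
  by_cases hci : c = i
  · subst hci; simp [burauExt, hij]
  · by_cases hcj : c = j
    · subst hcj; simp [burauExt, hci]
    · simp [burauExt, hci, hcj, Ne.symm hci]

theorem burauExt_row_of_ne {r : Fin n} (hr : r ≠ i) : burauExt n t i j r = Pi.single r 1 := by
  ext c
  by_cases hc : c = r
  · subst hc; simp [burauExt, hr]
  · simp [burauExt, hr, hc, Ne.symm hc]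

theorem burauExt_row_sum (hij : i ≠ j) (r : Fin n) : ∑ c, burauExt n t i j r c = 1 := by
  by_cases hr : r = i
  · subst hr
    simp [burauExt_row_self t hij, Finset.sum_add_distrib]
  · simp [burauExt_row_of_ne t hr]

end burauExt

theorem swapMat_eq_permMatrix (d : ℕ) (i : Fin d) :
    swapMat d i = (Equiv.swap i.castSucc i.succ).permMatrix ℂ := by
  ext r c
  simp only [swapMat, of_apply, PEquiv.toMatrix_apply, Equiv.toPEquiv_apply, Option.mem_def,
    Option.some.injEq, Equiv.swap_apply_def]
  split_ifs <;> grind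

theorem swapMat_mulVec_const (d : ℕ) (i : Fin d) (a : ℂ) :
    swapMat d i *ᵥ (fun _ => a) = fun _ => a := by
  rw [swapMat_eq_permMatrix, permMatrix_mulVec]
  rfl

theorem stmt5_general (d : ℕ) (hd : 1 ≤ d) (t : ℂ) :
    (∀ i j : Fin (d+1), i ≠ j →
        (burauExt (d+1) t i j).mulVec (fun _ => 1) = fun _ => 1) ∧
    (∀ i : Fin d, (swapMat d i).mulVec (fun _ => (1:ℂ)) = fun _ => 1) ∧
    ∃ S : Submodule ℂ (Fin (d+1) → ℂ), S ≠ ⊥ ∧ S ≠ ⊤ ∧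
      (∀ i j : Fin (d+1), i ≠ j → ∀ x ∈ S, (burauExt (d+1) t i j).mulVec x ∈ S) ∧
      (∀ i : Fin d, ∀ x ∈ S, (swapMat d i).mulVec x ∈ S) := by
  have hB : ∀ i j : Fin (d+1), i ≠ j → burauExt (d+1) t i j *ᵥ (fun _ => 1) = fun _ => 1 :=
    fun i j hij => mulVec_const_one_of_row_sum_eq_one _ (burauExt_row_sum t hij)
  have hA : ∀ i : Fin d, swapMat d i *ᵥ (fun _ => (1:ℂ)) = fun _ => 1 :=
    fun i => swapMat_mulVec_const d i 1
  refine ⟨hB, hA, ℂ ∙ fun _ => 1, ?_, ?_, ?_, ?_⟩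
  · simpa [Submodule.span_singleton_eq_bot] using Function.ne_iff.mpr ⟨0, one_ne_zero⟩
  · apply Submodule.span_singleton_ne_top_of_one_lt_finrank
    simp only [Module.finrank_fin_fun]
    omega
  · exact fun i j hij x => Submodule.mulVec_mem_span_singleton (hB i j hij)
  · exact fun i x => Submodule.mulVec_mem_span_singleton (hA i)

theorem stmt5 (d : ℕ) (hd : 1 ≤ d) (t : ℂ) (ht : t ≠ 0) :
    (∀ i j : Fin (d+1), i ≠ j →
        (burauExt (d+1) t i j).mulVec (fun _ => 1) = fun _ => 1) ∧
    (∀ i : Fin d, (swapMat d i).mulVec (fun _ => (1:ℂ)) = fun _ => 1) ∧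
    ∃ S : Submodule ℂ (Fin (d+1) → ℂ), S ≠ ⊥ ∧ S ≠ ⊤ ∧
      (∀ i j : Fin (d+1), i ≠ j → ∀ x ∈ S, (burauExt (d+1) t i j).mulVec x ∈ S) ∧
      (∀ i : Fin d, ∀ x ∈ S, (swapMat d i).mulVec x ∈ S) :=
  stmt5_general d hd t
end

section
/- Let n ≥ 2 and let t be a nonzero complex number with t ≠ 1. Then the only subspaces of C^{n−1} invariant under all matrices φ̂_B(ε_{ij}) (1 ≤ i ≠ j ≤ n) are {0} and C^{n−1}; in particular the representation φ̂_B of C_n is irreducible. -/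
open Matrix

/-- The `(n-1)`-dimensional composition factor `φ̂_B` of Bardakov's extension of the
Burau representation of `C_n`, at `n = d+1`, on the generator `ε i j`. -/
noncomputable def phiB (d : ℕ) (t : ℂ) (i j : Fin (d+1)) :
    Matrix (Fin d) (Fin d) ℂ :=
  if i = Fin.last d then
    Matrix.of fun r c =>
      if r.castSucc = j then (if c.castSucc = j then t⁻¹ else t⁻¹ - 1)
      else if r = c then 1 else 0
  else
    Matrix.of fun r c =>
      if r.castSucc = i ∧ c.castSucc = i then t⁻¹
      else if r.castSucc = j ∧ c.castSucc = i then 1 - t⁻¹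
      else if r = c then 1 else 0

/-- The image of the transposition generator `α i` (for `i : Fin d`, `1`-based index
`i+1`) under `φ̂_B`: for `i+1 < d` it swaps the basis vectors at positions `i` and
`i+1`; the last one is the identity except that its last row is `(-1, …, -1)`. -/
noncomputable def alphaB (d : ℕ) (i : Fin d) : Matrix (Fin d) (Fin d) ℂ :=
  if i.val + 1 = d then
    Matrix.of fun r c => if r.val + 1 = d then -1 else if r = c then 1 else 0
  else
    Matrix.of fun r c =>
      if (r.val = i.val ∧ c.val = i.val + 1) ∨ (r.val = i.val + 1 ∧ c.val = i.val) then 1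
      else if r = c ∧ r.val ≠ i.val ∧ r.val ≠ i.val + 1 then 1 else 0

lemma phiB_last (d : ℕ) (t : ℂ) (r : Fin d) :
    phiB d t r.castSucc (Fin.last d) =
    Matrix.of fun a c : Fin d =>
      if a = r ∧ c = r then t⁻¹ else if a = c then (1:ℂ) else 0 := by
  unfold phiB
  rw [if_neg (Fin.castSucc_lt_last r).ne]
  ext a c
  simp [Fin.castSucc_inj, (Fin.castSucc_lt_last a).ne]

lemma phiB_cs (d : ℕ) (t : ℂ) (r k : Fin d) :
    phiB d t r.castSucc k.castSucc =
    Matrix.of fun a c : Fin d =>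
      if a = r ∧ c = r then t⁻¹
      else if a = k ∧ c = r then 1 - t⁻¹
      else if a = c then (1:ℂ) else 0 := by
  unfold phiB
  rw [if_neg (Fin.castSucc_lt_last r).ne]
  ext a c
  simp [Fin.castSucc_inj]

theorem stmt7 (d : ℕ) (hd : 1 ≤ d) (t : ℂ) (ht : t ≠ 0) (ht1 : t ≠ 1) :
    ∀ S : Submodule ℂ (Fin d → ℂ),
      (∀ i j : Fin (d+1), i ≠ j → ∀ x ∈ S, (phiB d t i j).mulVec x ∈ S) →
      S = ⊥ ∨ S = ⊤ := by
  intro S hS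
  by_cases hbot : S = ⊥
  · exact Or.inl hbot
  right
  have hti : t⁻¹ - 1 ≠ 0 := by
    intro h
    exact ht1 (by rwa [sub_eq_zero, inv_eq_one] at h)
  obtain ⟨x, hxS, hx0⟩ : ∃ x ∈ S, x ≠ 0 := by
    by_contra h
    push_neg at h
    exact hbot ((Submodule.eq_bot_iff S).2 h)
  obtain ⟨r, hr⟩ : ∃ r, x r ≠ 0 := Function.ne_iff.1 hx0
  have hMx : (phiB d t r.castSucc (Fin.last d)).mulVec x ∈ S :=
    hS _ _ (Fin.castSucc_lt_last r).ne x hxS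
  have hkey : (phiB d t r.castSucc (Fin.last d)).mulVec x - x
      = ((t⁻¹ - 1) * x r) • (Pi.single r 1 : Fin d → ℂ) := by
    funext a
    rw [phiB_last]
    have hsum : (Matrix.of fun a c : Fin d =>
        if a = r ∧ c = r then t⁻¹ else if a = c then (1:ℂ) else 0).mulVec x a
        = x a + (if a = r then (t⁻¹ - 1) * x r else 0) := by
      rw [Matrix.mulVec, dotProduct]
      have hterm : ∀ c : Fin d, (Matrix.of fun a c : Fin d =>
          if a = r ∧ c = r then t⁻¹ else if a = c then (1:ℂ) else 0) a c * x c
          = (if a = c then x c else 0) + (if a = r ∧ c = r then (t⁻¹ - 1) * x c else 0) := by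
        intro c
        by_cases hc : c = r <;> by_cases hac : a = c <;> simp_all <;> ring
      rw [Finset.sum_congr rfl fun c _ => hterm c, Finset.sum_add_distrib]
      by_cases ha : a = r <;>
        simp [ha, ite_and, Finset.sum_ite_eq, Finset.sum_ite_eq']
    rw [Pi.sub_apply, hsum]
    by_cases ha : a = r <;> simp [ha, Pi.single_apply] <;> ring
  have her : (Pi.single r 1 : Fin d → ℂ) ∈ S := by
    have h1 : ((t⁻¹ - 1) * x r) • (Pi.single r 1 : Fin d → ℂ) ∈ S := by
      rw [← hkey]; exact S.sub_mem hMx hxS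
    have h2 := S.smul_mem ((t⁻¹ - 1) * x r)⁻¹ h1
    rwa [smul_smul, inv_mul_cancel₀ (mul_ne_zero hti hr), one_smul] at h2
  have hek : ∀ k : Fin d, (Pi.single k 1 : Fin d → ℂ) ∈ S := by
    intro k
    by_cases hk : k = r
    · exact hk ▸ her
    have hne : (r.castSucc : Fin (d+1)) ≠ k.castSucc := by
      rw [Ne, Fin.castSucc_inj]
      exact fun h => hk h.symm
    have hM : (phiB d t r.castSucc k.castSucc).mulVec (Pi.single r 1) ∈ S :=
      hS _ _ hne _ her
    have hcol : (phiB d t r.castSucc k.castSucc).mulVec (Pi.single r 1)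
        = t⁻¹ • (Pi.single r 1 : Fin d → ℂ) + (1 - t⁻¹) • (Pi.single k 1 : Fin d → ℂ) := by
      rw [phiB_cs]
      funext a
      simp only [Matrix.mulVec_single, Matrix.of_apply, mul_one, Pi.add_apply,
        Pi.smul_apply, Pi.single_apply, smul_eq_mul]
      by_cases ha : a = r
      · subst ha
        have hak : a ≠ k := fun h => hk h.symm
        simp [hak]
      · by_cases hak : a = k
        · subst hak
          simp [hk]
        · simp [ha, hak]
    have h2 : (1 - t⁻¹) • (Pi.single k 1 : Fin d → ℂ) ∈ S := by
      have h3 := S.sub_mem hM (S.smul_mem t⁻¹ her)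
      rwa [hcol, add_sub_cancel_left] at h3
    have h1t : (1:ℂ) - t⁻¹ ≠ 0 := fun h => hti (by rw [sub_eq_zero] at h ⊢; exact h.symm)
    have h4 := S.smul_mem (1 - t⁻¹)⁻¹ h2
    rwa [smul_smul, inv_mul_cancel₀ h1t, one_smul] at h4
  rw [Submodule.eq_top_iff']
  intro v
  have hv : v = ∑ k : Fin d, v k • (Pi.single k 1 : Fin d → ℂ) := by
    funext a
    simp [Pi.single_apply, Finset.sum_ite_eq']
  rw [hv]
  exact Submodule.sum_mem S fun k _ => S.smul_mem (v k) (hek k)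
end

section
/- Let t be a nonzero complex number with t ≠ 1, and consider the eight 2×2 matrices A(ε_{12}) = [[t^{-1},0],[1−t^{-1},1]], A(ε_{21}) = [[1,1−t^{-1}],[0,t^{-1}]], A(ε_{13}) = diag(t^{-1},1), A(ε_{31}) = [[t^{-1},t^{-1}−1],[0,1]], A(ε_{32}) = [[1,0],[t^{-1}−1,t^{-1}]], A(ε_{23}) = diag(1,t^{-1}), A(α_1) = [[0,1],[1,0]], A(α_2) = [[1,0],[−1,−1]]. If m = t, then the subspace of C^4 spanned by e_1, e_2+e_3, e_4 is invariant under all Kronecker products A(g) ⊗ A(g) for these eight generators g; hence φ̂_B(t) ⊗ φ̂_B(t) is reducible. -/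
open Matrix

/-- Kronecker product of two `2 × 2` complex matrices as a `4 × 4` matrix, with basis
ordering `e₁⊗e₁, e₁⊗e₂, e₂⊗e₁, e₂⊗e₂`. -/
noncomputable def kron (A B : Matrix (Fin 2) (Fin 2) ℂ) : Matrix (Fin 4) (Fin 4) ℂ :=
  Matrix.of fun r c =>
    A ⟨r.val / 2, by have := r.isLt; omega⟩ ⟨c.val / 2, by have := c.isLt; omega⟩ *
    B ⟨r.val % 2, by have := r.isLt; omega⟩ ⟨c.val % 2, by have := c.isLt; omega⟩

/-- The six generator images `ε₁₂, ε₂₁, ε₁₃, ε₃₁, ε₃₂, ε₂₃` of `Cb₃` under the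
`2`-dimensional representation `φ̂_G(t₁,t₂,t₃)`. -/
noncomputable def phiG3 (t1 t2 t3 : ℂ) : Fin 6 → Matrix (Fin 2) (Fin 2) ℂ :=
  ![!![t2⁻¹, 0; t2⁻¹ * (t1 - 1), 1],
    !![1, t1⁻¹ * (t2 - 1); 0, t1⁻¹],
    !![t3⁻¹, 0; 0, 1],
    !![t1⁻¹, -(t1⁻¹ * (t2 - 1)); 0, 1],
    !![1, 0; -(t2⁻¹ * (t1 - 1)), t2⁻¹],
    !![1, 0; 0, t3⁻¹]]

/-- The eight generator images `ε₁₂, ε₂₁, ε₁₃, ε₃₁, ε₃₂, ε₂₃, α₁, α₂` of `C₃` under the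
`2`-dimensional representation `φ̂_B(t)`. -/
noncomputable def phiB3 (t : ℂ) : Fin 8 → Matrix (Fin 2) (Fin 2) ℂ :=
  ![!![t⁻¹, 0; 1 - t⁻¹, 1],
    !![1, 1 - t⁻¹; 0, t⁻¹],
    !![t⁻¹, 0; 0, 1],
    !![t⁻¹, t⁻¹ - 1; 0, 1],
    !![1, 0; t⁻¹ - 1, t⁻¹],
    !![1, 0; 0, t⁻¹],
    !![0, 1; 1, 0],
    !![1, 0; -1, -1]]

noncomputable def fsym : (Fin 4 → ℂ) →ₗ[ℂ] ℂ :=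
  (LinearMap.proj 1 : (Fin 4 → ℂ) →ₗ[ℂ] ℂ) - (LinearMap.proj 2 : (Fin 4 → ℂ) →ₗ[ℂ] ℂ)

lemma fsym_apply (v : Fin 4 → ℂ) : fsym v = v 1 - v 2 := rfl

lemma span_eq : Submodule.span ℂ
    {(Pi.single 0 1 : Fin 4 → ℂ), Pi.single 1 1 + Pi.single 2 1, Pi.single 3 1}
    = LinearMap.ker fsym := by
  apply le_antisymm
  · rw [Submodule.span_le]
    rintro v (rfl | rfl | rfl) <;>
      simp [LinearMap.mem_ker, fsym_apply, Pi.single_apply]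
  · intro v hv
    rw [LinearMap.mem_ker, fsym_apply, sub_eq_zero] at hv
    have : v = v 0 • (Pi.single 0 1 : Fin 4 → ℂ) +
        v 1 • ((Pi.single 1 1 : Fin 4 → ℂ) + Pi.single 2 1) +
        v 3 • (Pi.single 3 1 : Fin 4 → ℂ) := by
      funext i
      fin_cases i <;> simp [Pi.single_apply, hv]
    rw [this]
    refine Submodule.add_mem _ (Submodule.add_mem _ ?_ ?_) ?_ <;>
      exact Submodule.smul_mem _ _ (Submodule.subset_span (by simp))

lemma kron_sym (A : Matrix (Fin 2) (Fin 2) ℂ) (x : Fin 4 → ℂ)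
    (hx : x 1 = x 2) : ((kron A A).mulVec x) 1 = ((kron A A).mulVec x) 2 := by
  have e10 : kron A A 1 0 = A 0 0 * A 1 0 := rfl
  have e11 : kron A A 1 1 = A 0 0 * A 1 1 := rfl
  have e12 : kron A A 1 2 = A 0 1 * A 1 0 := rfl
  have e13 : kron A A 1 3 = A 0 1 * A 1 1 := rfl
  have e20 : kron A A 2 0 = A 1 0 * A 0 0 := rfl
  have e21 : kron A A 2 1 = A 1 0 * A 0 1 := rfl
  have e22 : kron A A 2 2 = A 1 1 * A 0 0 := rfl
  have e23 : kron A A 2 3 = A 1 1 * A 0 1 := rfl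
  simp only [mulVec, dotProduct, Fin.sum_univ_four, e10, e11, e12, e13, e20, e21, e22, e23, hx]
  ring

theorem stmt12 (t m : ℂ) (ht : t ≠ 0) (ht1 : t ≠ 1) (hm : m = t) :
    Submodule.span ℂ
        {(Pi.single 0 1 : Fin 4 → ℂ), Pi.single 1 1 + Pi.single 2 1, Pi.single 3 1} ≠ ⊥ ∧
    Submodule.span ℂ
        {(Pi.single 0 1 : Fin 4 → ℂ), Pi.single 1 1 + Pi.single 2 1, Pi.single 3 1} ≠ ⊤ ∧
    ∀ g : Fin 8,
      ∀ x ∈ Submodule.span ℂ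
          {(Pi.single 0 1 : Fin 4 → ℂ), Pi.single 1 1 + Pi.single 2 1, Pi.single 3 1},
        (kron (phiB3 t g) (phiB3 m g)).mulVec x ∈
          Submodule.span ℂ
            {(Pi.single 0 1 : Fin 4 → ℂ), Pi.single 1 1 + Pi.single 2 1, Pi.single 3 1} := by
  subst hm
  rw [span_eq]
  refine ⟨?_, ?_, ?_⟩
  · intro h
    have h0 : (Pi.single 0 1 : Fin 4 → ℂ) ∈ LinearMap.ker fsym := by
      rw [LinearMap.mem_ker, fsym_apply]; simp [Pi.single_apply]
    rw [h, Submodule.mem_bot] at h0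
    have := congrFun h0 0
    simp [Pi.single_apply] at this
  · intro h
    have h1 : (Pi.single 1 1 : Fin 4 → ℂ) ∈ LinearMap.ker fsym := by
      rw [h]; trivial
    rw [LinearMap.mem_ker, fsym_apply] at h1
    simp [Pi.single_apply] at h1
  · intro g x hx
    rw [LinearMap.mem_ker, fsym_apply, sub_eq_zero] at hx ⊢
    exact kron_sym _ x hx
end

section
/- Let t and m be nonzero complex numbers with t ≠ 1, m ≠ 1, t ≠ m, and tm ≠ 1. Then the only subspaces of C^4 invariant under all eight Kronecker products φ̂_B(t)(g) ⊗ φ̂_B(m)(g), for g ranging over ε_{12}, ε_{21}, ε_{13}, ε_{31}, ε_{32}, ε_{23}, α_1, α_2, are {0} and C^4. -/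
open Matrix

lemma kron_eq (A B : Matrix (Fin 2) (Fin 2) ℂ) : kron A B =
    !![A 0 0 * B 0 0, A 0 0 * B 0 1, A 0 1 * B 0 0, A 0 1 * B 0 1;
       A 0 0 * B 1 0, A 0 0 * B 1 1, A 0 1 * B 1 0, A 0 1 * B 1 1;
       A 1 0 * B 0 0, A 1 0 * B 0 1, A 1 1 * B 0 0, A 1 1 * B 0 1;
       A 1 0 * B 1 0, A 1 0 * B 1 1, A 1 1 * B 1 0, A 1 1 * B 1 1] := by
  ext r c
  fin_cases r <;> fin_cases c <;> rfl

-- diagonal action of generator 2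
lemma Dspec (t m : ℂ) (v : Fin 4 → ℂ) :
    (kron (phiB3 t 2) (phiB3 m 2)).mulVec v
      = fun i => ![t⁻¹ * m⁻¹, t⁻¹, m⁻¹, 1] i * v i := by
  funext i
  fin_cases i <;>
    simp [kron_eq, phiB3, Matrix.mulVec, dotProduct, Fin.sum_univ_four]

lemma step_mem (t m : ℂ) (S : Submodule ℂ (Fin 4 → ℂ))
    (hS : ∀ x ∈ S, (kron (phiB3 t 2) (phiB3 m 2)).mulVec x ∈ S)
    {u : Fin 4 → ℂ} (hu : u ∈ S) (c : ℂ) :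
    (fun i => (![t⁻¹ * m⁻¹, t⁻¹, m⁻¹, 1] i - c) * u i) ∈ S := by
  have h := S.sub_mem (hS u hu) (S.smul_mem c hu)
  rw [Dspec] at h
  convert h using 1
  funext i; simp; ring

lemma proj_mem (t m : ℂ)
    (hd : ∀ i j : Fin 4, i ≠ j → ![t⁻¹ * m⁻¹, t⁻¹, m⁻¹, (1:ℂ)] i ≠ ![t⁻¹ * m⁻¹, t⁻¹, m⁻¹, 1] j)
    (S : Submodule ℂ (Fin 4 → ℂ))
    (hS : ∀ x ∈ S, (kron (phiB3 t 2) (phiB3 m 2)).mulVec x ∈ S)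
    {v : Fin 4 → ℂ} (hv : v ∈ S) (i : Fin 4) :
    (v i) • (Pi.single i 1 : Fin 4 → ℂ) ∈ S := by
  set d : Fin 4 → ℂ := ![t⁻¹ * m⁻¹, t⁻¹, m⁻¹, 1] with hdd
  have key : ∀ j k l : Fin 4, i ≠ j → i ≠ k → i ≠ l →
      (fun x => (d x - d l) * ((d x - d k) * ((d x - d j) * v x))) ∈ S →
      (∀ x : Fin 4, x ≠ i → x = j ∨ x = k ∨ x = l) →
      (v i) • (Pi.single i 1 : Fin 4 → ℂ) ∈ S := by
    intro j k l hij hik hil h3 hcov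
    set c : ℂ := (d i - d l) * ((d i - d k) * (d i - d j)) with hc
    have hc0 : c ≠ 0 := by
      refine mul_ne_zero (sub_ne_zero.2 (hd _ _ hil)) (mul_ne_zero ?_ ?_) <;>
        exact sub_ne_zero.2 (hd _ _ (by assumption))
    have heq : (fun x => (d x - d l) * ((d x - d k) * ((d x - d j) * v x)))
        = c • ((v i) • (Pi.single i 1 : Fin 4 → ℂ)) := by
      funext x
      by_cases hx : x = i
      · subst hx; simp [Pi.single_apply, hc]; ring
      · rcases hcov x hx with h | h | h <;> subst h <;>
          simp [Pi.single_apply, Ne.symm hx] <;> ring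
    rw [heq] at h3
    have := S.smul_mem c⁻¹ h3
    rwa [smul_smul, inv_mul_cancel₀ hc0, one_smul] at this
  have s1 := step_mem t m S hS hv
  fin_cases i
  · exact key 1 2 3 (by decide) (by decide) (by decide)
      (step_mem t m S hS (step_mem t m S hS (s1 (d 1)) (d 2)) (d 3)) (by decide)
  · exact key 0 2 3 (by decide) (by decide) (by decide)
      (step_mem t m S hS (step_mem t m S hS (s1 (d 0)) (d 2)) (d 3)) (by decide)
  · exact key 0 1 3 (by decide) (by decide) (by decide)
      (step_mem t m S hS (step_mem t m S hS (s1 (d 0)) (d 1)) (d 3)) (by decide)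
  · exact key 0 1 2 (by decide) (by decide) (by decide)
      (step_mem t m S hS (step_mem t m S hS (s1 (d 0)) (d 1)) (d 2)) (by decide)

lemma M6spec (t m : ℂ) (v : Fin 4 → ℂ) :
    (kron (phiB3 t 6) (phiB3 m 6)).mulVec v = ![v 3, v 2, v 1, v 0] := by
  have h1 : phiB3 t 6 = !![(0:ℂ), 1; 1, 0] := rfl
  have h2 : phiB3 m 6 = !![(0:ℂ), 1; 1, 0] := rfl
  rw [h1, h2]
  funext i
  fin_cases i <;>
    simp [kron_eq, Matrix.mulVec, dotProduct, Fin.sum_univ_four]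

lemma M7spec (t m : ℂ) (v : Fin 4 → ℂ) :
    (kron (phiB3 t 7) (phiB3 m 7)).mulVec v =
      ![v 0, -v 0 - v 1, -v 0 - v 2, v 0 + v 1 + v 2 + v 3] := by
  have h1 : phiB3 t 7 = !![(1:ℂ), 0; -1, -1] := rfl
  have h2 : phiB3 m 7 = !![(1:ℂ), 0; -1, -1] := rfl
  rw [h1, h2]
  funext i
  fin_cases i <;>
    simp [kron_eq, Matrix.mulVec, dotProduct, Fin.sum_univ_four] <;> ring

theorem stmt13 (t m : ℂ) (ht : t ≠ 0) (hm : m ≠ 0) (ht1 : t ≠ 1) (hm1 : m ≠ 1)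
    (htm : t ≠ m) (htm1 : t * m ≠ 1) :
    ∀ S : Submodule ℂ (Fin 4 → ℂ),
      (∀ g : Fin 8, ∀ x ∈ S, (kron (phiB3 t g) (phiB3 m g)).mulVec x ∈ S) →
      S = ⊥ ∨ S = ⊤ := by
  intro S hS
  by_cases hbot : S = ⊥
  · exact Or.inl hbot
  right
  -- distinctness of the diagonal entries
  have ha : t⁻¹ ≠ 1 := fun h => ht1 (by rwa [inv_eq_one] at h)
  have hb : m⁻¹ ≠ 1 := fun h => hm1 (by rwa [inv_eq_one] at h)
  have hab : t⁻¹ ≠ m⁻¹ := fun h => htm (inv_injective h)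
  have hab1 : t⁻¹ * m⁻¹ ≠ 1 := by
    rw [← mul_inv]; exact fun h => htm1 (by rwa [inv_eq_one] at h)
  have h0a : t⁻¹ * m⁻¹ ≠ t⁻¹ := fun h => hb
    (mul_left_cancel₀ (inv_ne_zero ht) (h.trans (mul_one t⁻¹).symm))
  have h0b : t⁻¹ * m⁻¹ ≠ m⁻¹ := fun h => ha
    (mul_right_cancel₀ (inv_ne_zero hm) (h.trans (one_mul m⁻¹).symm))
  have hd : ∀ i j : Fin 4, i ≠ j →
      ![t⁻¹ * m⁻¹, t⁻¹, m⁻¹, (1:ℂ)] i ≠ ![t⁻¹ * m⁻¹, t⁻¹, m⁻¹, 1] j := by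
    intro i j hij
    fin_cases i <;> fin_cases j <;>
      first
        | exact absurd rfl hij
        | (simp only [Matrix.cons_val_zero, Matrix.cons_val_one, Matrix.head_cons,
            Matrix.cons_val', Matrix.cons_val_fin_one, Matrix.empty_val',
            Matrix.head_fin_const, Fin.isValue, Matrix.cons_val_two, Matrix.tail_cons,
            Matrix.cons_val_three]
           first
            | assumption
            | exact Ne.symm h0a | exact Ne.symm h0b | exact Ne.symm hab1
            | exact Ne.symm hab | exact Ne.symm ha | exact Ne.symm hb)
  have hproj : ∀ {w : Fin 4 → ℂ}, w ∈ S → ∀ j : Fin 4,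
      (w j) • (Pi.single j 1 : Fin 4 → ℂ) ∈ S :=
    fun hw j => proj_mem t m hd S (hS 2) hw j
  -- a coordinate vector in S
  obtain ⟨v, hv, hv0⟩ := (Submodule.ne_bot_iff S).1 hbot
  obtain ⟨i, hvi⟩ := Function.ne_iff.1 hv0
  have single_mem : ∀ (w : Fin 4 → ℂ), w ∈ S → ∀ j : Fin 4, w j ≠ 0 →
      (Pi.single j 1 : Fin 4 → ℂ) ∈ S := by
    intro w hw j hwj
    have h := S.smul_mem (w j)⁻¹ (hproj hw j)
    rwa [smul_smul, inv_mul_cancel₀ hwj, one_smul] at h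
  have hei : (Pi.single i 1 : Fin 4 → ℂ) ∈ S := single_mem v hv i hvi
  -- get e₀ ∈ S
  have e0 : (Pi.single (0 : Fin 4) 1 : Fin 4 → ℂ) ∈ S := by
    have from3 : (Pi.single (3 : Fin 4) 1 : Fin 4 → ℂ) ∈ S →
        (Pi.single (0 : Fin 4) 1 : Fin 4 → ℂ) ∈ S := by
      intro h3
      have := hS 6 _ h3
      rw [M6spec] at this
      refine single_mem _ this 0 ?_
      simp [Pi.single_apply]
    have from1 : (Pi.single (1 : Fin 4) 1 : Fin 4 → ℂ) ∈ S →
        (Pi.single (0 : Fin 4) 1 : Fin 4 → ℂ) ∈ S := by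
      intro h1
      have := hS 7 _ h1
      rw [M7spec] at this
      refine from3 (single_mem _ this 3 ?_)
      simp [Pi.single_apply]
    fin_cases i
    · exact hei
    · exact from1 hei
    · refine from1 ?_
      have := hS 6 _ hei
      rw [M6spec] at this
      refine single_mem _ this 1 ?_
      simp [Pi.single_apply]
    · exact from3 hei
  -- all coordinate vectors in S
  have w0 := hS 7 _ e0
  rw [M7spec] at w0
  have hall : ∀ j : Fin 4, (Pi.single j 1 : Fin 4 → ℂ) ∈ S := by
    intro j
    refine single_mem _ w0 j ?_
    fin_cases j <;> simp [Pi.single_apply]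
  rw [Submodule.eq_top_iff']
  intro x
  have hx : x = ∑ j : Fin 4, x j • (Pi.single j 1 : Fin 4 → ℂ) := by
    funext k
    rw [Finset.sum_apply]
    fin_cases k <;> simp [Pi.single_apply, Fin.sum_univ_four]
  rw [hx]
  exact Submodule.sum_mem S fun j _ => S.smul_mem _ (hall j)
end

section
/- Let t and m be nonzero complex numbers with t ≠ 1, m ≠ 1, t ≠ m, and tm = 1 (so m = t^{-1}). Then the only subspaces of C^4 invariant under all eight Kronecker products φ̂_B(t)(g) ⊗ φ̂_B(m)(g), for g ranging over ε_{12}, ε_{21}, ε_{13}, ε_{31}, ε_{32}, ε_{23}, α_1, α_2, are {0} and C^4. -/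
open Matrix

lemma phiB3_e0 (s : ℂ) : phiB3 s 0 = !![s⁻¹, 0; 1 - s⁻¹, 1] := rfl
lemma phiB3_e1 (s : ℂ) : phiB3 s 1 = !![1, 1 - s⁻¹; 0, s⁻¹] := rfl
lemma phiB3_e2 (s : ℂ) : phiB3 s 2 = !![s⁻¹, 0; 0, 1] := rfl
lemma phiB3_e6 (s : ℂ) : phiB3 s 6 = !![0, 1; 1, 0] := rfl

lemma kron_mulVec (A B : Matrix (Fin 2) (Fin 2) ℂ) (x : Fin 4 → ℂ) :
    (kron A B).mulVec x = ![
      A 0 0 * B 0 0 * x 0 + A 0 0 * B 0 1 * x 1 + A 0 1 * B 0 0 * x 2 + A 0 1 * B 0 1 * x 3,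
      A 0 0 * B 1 0 * x 0 + A 0 0 * B 1 1 * x 1 + A 0 1 * B 1 0 * x 2 + A 0 1 * B 1 1 * x 3,
      A 1 0 * B 0 0 * x 0 + A 1 0 * B 0 1 * x 1 + A 1 1 * B 0 0 * x 2 + A 1 1 * B 0 1 * x 3,
      A 1 0 * B 1 0 * x 0 + A 1 0 * B 1 1 * x 1 + A 1 1 * B 1 0 * x 2 + A 1 1 * B 1 1 * x 3] := by
  funext i
  fin_cases i <;>
    simp [mulVec, dotProduct, Fin.sum_univ_four, kron] <;>
    norm_num [Fin.ext_iff, show ((3:Fin 4):ℕ)=3 from rfl, show ((2:Fin 4):ℕ)=2 from rfl]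

set_option maxHeartbeats 1000000 in
theorem stmt14 (t m : ℂ) (ht : t ≠ 0) (hm : m ≠ 0) (ht1 : t ≠ 1) (hm1 : m ≠ 1)
    (htm : t ≠ m) (htm1 : t * m = 1) :
    ∀ S : Submodule ℂ (Fin 4 → ℂ),
      (∀ g : Fin 8, ∀ x ∈ S, (kron (phiB3 t g) (phiB3 m g)).mulVec x ∈ S) →
      S = ⊥ ∨ S = ⊤ := by
  have hmt : m = t⁻¹ := eq_inv_of_mul_eq_one_right htm1
  subst hmt
  intro S hS
  by_cases hbot : S = ⊥
  · exact Or.inl hbot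
  right
  -- basic nonvanishing facts
  have hu0 : t⁻¹ ≠ 0 := inv_ne_zero ht
  have hu1 : t⁻¹ ≠ 1 := by
    intro h; apply ht1; field_simp at h; exact h.symm
  have hut : t⁻¹ ≠ t := fun h => htm h.symm
  have hu1' : t⁻¹ - 1 ≠ 0 := sub_ne_zero.mpr hu1
  have hut' : t⁻¹ - t ≠ 0 := sub_ne_zero.mpr hut
  have ht1' : t - 1 ≠ 0 := sub_ne_zero.mpr ht1
  have htu' : t - t⁻¹ ≠ 0 := sub_ne_zero.mpr (fun h => htm h)
  -- scaling helper
  have escale : ∀ (a : ℂ) (v : Fin 4 → ℂ), a ≠ 0 → a • v ∈ S → v ∈ S := by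
    intro a v ha h
    have := S.smul_mem a⁻¹ h
    rwa [smul_smul, inv_mul_cancel₀ ha, one_smul] at this
  -- the diagonal operator D = kron (phiB3 t 2) (phiB3 t⁻¹ 2) = diag(1, t⁻¹, t, 1)
  set D : Matrix (Fin 4) (Fin 4) ℂ := kron (phiB3 t 2) (phiB3 t⁻¹ 2) with hD
  have hDv : ∀ v : Fin 4 → ℂ, D.mulVec v = ![v 0, t⁻¹ * v 1, t * v 2, v 3] := by
    intro v; funext i
    fin_cases i <;> simp [hD, kron_mulVec, phiB3_e2, inv_inv] <;> field_simp
  -- spectral projection onto coordinate 1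
  have P1 : ∀ x ∈ S, (x 1) • (![0,1,0,0] : Fin 4 → ℂ) ∈ S := by
    intro x hx
    have h1 : D.mulVec x ∈ S := hS 2 x hx
    have h2 : D.mulVec (D.mulVec x) ∈ S := hS 2 _ h1
    have hmem : D.mulVec (D.mulVec x) + ((-(1+t)) • D.mulVec x + t • x) ∈ S :=
      S.add_mem h2 (S.add_mem (S.smul_mem _ h1) (S.smul_mem _ hx))
    have heq : D.mulVec (D.mulVec x) + ((-(1+t)) • D.mulVec x + t • x)
        = ((t⁻¹ - 1) * (t⁻¹ - t)) • ((x 1) • (![0,1,0,0] : Fin 4 → ℂ)) := by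
      rw [hDv, hDv, smul_smul]
      funext i
      fin_cases i <;>
        simp [Matrix.vecHead, Matrix.vecTail, show (Fin.succ 2 : Fin 4) = 3 from rfl] <;>
        (try field_simp) <;> (try ring)
    rw [heq] at hmem
    exact escale _ _ (mul_ne_zero hu1' hut') hmem
  -- spectral projection onto coordinate 2
  have P2 : ∀ x ∈ S, (x 2) • (![0,0,1,0] : Fin 4 → ℂ) ∈ S := by
    intro x hx
    have h1 : D.mulVec x ∈ S := hS 2 x hx
    have h2 : D.mulVec (D.mulVec x) ∈ S := hS 2 _ h1
    have hmem : D.mulVec (D.mulVec x) + ((-(1+t⁻¹)) • D.mulVec x + t⁻¹ • x) ∈ S :=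
      S.add_mem h2 (S.add_mem (S.smul_mem _ h1) (S.smul_mem _ hx))
    have heq : D.mulVec (D.mulVec x) + ((-(1+t⁻¹)) • D.mulVec x + t⁻¹ • x)
        = ((t - 1) * (t - t⁻¹)) • ((x 2) • (![0,0,1,0] : Fin 4 → ℂ)) := by
      rw [hDv, hDv, smul_smul]
      funext i
      fin_cases i <;>
        simp [Matrix.vecHead, Matrix.vecTail, show (Fin.succ 2 : Fin 4) = 3 from rfl] <;>
        (try field_simp) <;> (try ring)
    rw [heq] at hmem
    exact escale _ _ (mul_ne_zero ht1' htu') hmem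
  -- from e2 ∈ S we get e1 ∈ S via the swap ⊗ swap matrix (g = 6)
  have swap21 : (![0,0,1,0] : Fin 4 → ℂ) ∈ S → (![0,1,0,0] : Fin 4 → ℂ) ∈ S := by
    intro h2
    have := hS 6 _ h2
    have heq : (kron (phiB3 t 6) (phiB3 t⁻¹ 6)).mulVec ![0,0,1,0]
        = (![0,1,0,0] : Fin 4 → ℂ) := by
      funext i; fin_cases i <;> simp [kron_mulVec, phiB3_e0, phiB3_e1, phiB3_e2, phiB3_e6, inv_inv, Matrix.vecHead, Matrix.vecTail]
    rwa [heq] at this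
  -- main claim: e1 ∈ S
  obtain ⟨x, hxS, hxne⟩ := Submodule.exists_mem_ne_zero_of_ne_bot hbot
  have he1 : (![0,1,0,0] : Fin 4 → ℂ) ∈ S := by
    by_cases h1 : x 1 = 0
    · by_cases h2 : x 2 = 0
      · by_cases h0 : x 0 = 0
        · -- x = x 3 • e3, so e3 ∈ S
          have h3 : x 3 ≠ 0 := by
            intro h3
            apply hxne
            funext i; fin_cases i <;> assumption
          have hx3 : x = (x 3) • (![0,0,0,1] : Fin 4 → ℂ) := by
            funext i; fin_cases i <;> simp [h0, h1, h2, Pi.smul_apply, smul_eq_mul]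
          have he3 : (![0,0,0,1] : Fin 4 → ℂ) ∈ S := by
            apply escale (x 3) _ h3; rwa [← hx3]
          -- apply g = 1 to e3; coordinate 1 is (1-t⁻¹)*t ≠ 0
          have hy : (kron (phiB3 t 1) (phiB3 t⁻¹ 1)).mulVec ![0,0,0,1] ∈ S := hS 1 _ he3
          have := P1 _ hy
          have hco : ((kron (phiB3 t 1) (phiB3 t⁻¹ 1)).mulVec ![0,0,0,1]) 1
              = (1 - t⁻¹) * t⁻¹⁻¹ := by
            simp [kron_mulVec, phiB3_e0, phiB3_e1, phiB3_e2, phiB3_e6, inv_inv, Matrix.vecHead, Matrix.vecTail]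
          rw [hco] at this
          refine escale _ _ ?_ this
          rw [inv_inv]
          exact mul_ne_zero (sub_ne_zero.mpr (fun h => hu1 h.symm)) ht
        · -- apply g = 0 to x; coordinate 1 is t⁻¹*(1-t)*x 0 ≠ 0
          have hy : (kron (phiB3 t 0) (phiB3 t⁻¹ 0)).mulVec x ∈ S := hS 0 _ hxS
          have := P1 _ hy
          have hco : ((kron (phiB3 t 0) (phiB3 t⁻¹ 0)).mulVec x) 1
              = t⁻¹ * (1 - t⁻¹⁻¹) * x 0 := by
            simp [kron_mulVec, phiB3_e0, inv_inv, h1, h2, Matrix.vecHead, Matrix.vecTail]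
          rw [hco] at this
          refine escale _ _ ?_ this
          rw [inv_inv]
          exact mul_ne_zero (mul_ne_zero hu0 (sub_ne_zero.mpr (fun h => ht1 h.symm))) h0
      · exact swap21 (escale _ _ h2 (P2 _ hxS))
    · exact escale _ _ h1 (P1 _ hxS)
  -- now get e2, e3, e0
  have he2 : (![0,0,1,0] : Fin 4 → ℂ) ∈ S := by
    have := hS 6 _ he1
    have heq : (kron (phiB3 t 6) (phiB3 t⁻¹ 6)).mulVec ![0,1,0,0]
        = (![0,0,1,0] : Fin 4 → ℂ) := by
      funext i; fin_cases i <;> simp [kron_mulVec, phiB3_e0, phiB3_e1, phiB3_e2, phiB3_e6, inv_inv, Matrix.vecHead, Matrix.vecTail]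
    rwa [heq] at this
  have he3 : (![0,0,0,1] : Fin 4 → ℂ) ∈ S := by
    have h0 := hS 0 _ he1
    have hmem : (kron (phiB3 t 0) (phiB3 t⁻¹ 0)).mulVec ![0,1,0,0] + (-t⁻¹) • ![0,1,0,0] ∈ S :=
      S.add_mem h0 (S.smul_mem _ he1)
    have heq : (kron (phiB3 t 0) (phiB3 t⁻¹ 0)).mulVec ![0,1,0,0] + (-t⁻¹) • ![0,1,0,0]
        = (1 - t⁻¹) • (![0,0,0,1] : Fin 4 → ℂ) := by
      funext i; fin_cases i <;>
        simp [kron_mulVec, phiB3_e0, inv_inv, Matrix.vecHead, Matrix.vecTail] <;> (try field_simp) <;> (try ring)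
    rw [heq] at hmem
    exact escale _ _ (sub_ne_zero.mpr (fun h => hu1 h.symm)) hmem
  have he0 : (![1,0,0,0] : Fin 4 → ℂ) ∈ S := by
    have := hS 6 _ he3
    have heq : (kron (phiB3 t 6) (phiB3 t⁻¹ 6)).mulVec ![0,0,0,1]
        = (![1,0,0,0] : Fin 4 → ℂ) := by
      funext i; fin_cases i <;> simp [kron_mulVec, phiB3_e0, phiB3_e1, phiB3_e2, phiB3_e6, inv_inv, Matrix.vecHead, Matrix.vecTail]
    rwa [heq] at this
  -- conclude
  rw [Submodule.eq_top_iff']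
  intro y
  have hy : y = y 0 • ![1,0,0,0] + y 1 • ![0,1,0,0] + y 2 • ![0,0,1,0] + y 3 • ![0,0,0,1] := by
    funext i; fin_cases i <;> simp [Pi.smul_apply, smul_eq_mul]
  rw [hy]
  exact S.add_mem (S.add_mem (S.add_mem (S.smul_mem _ he0) (S.smul_mem _ he1))
    (S.smul_mem _ he2)) (S.smul_mem _ he3)
end

section
/- Let t and m be nonzero complex numbers with t ≠ 1 and m ≠ 1. The tensor product representation φ̂_B(t) ⊗ φ̂_B(m) of C_3 on C^4 is irreducible if and only if t ≠ m. -/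
open Matrix

lemma phiB3_0 (t : ℂ) : phiB3 t 0 = !![t⁻¹, 0; 1 - t⁻¹, 1] := rfl
lemma phiB3_1 (t : ℂ) : phiB3 t 1 = !![1, 1 - t⁻¹; 0, t⁻¹] := rfl
lemma phiB3_2 (t : ℂ) : phiB3 t 2 = !![t⁻¹, 0; 0, 1] := rfl
lemma phiB3_3 (t : ℂ) : phiB3 t 3 = !![t⁻¹, t⁻¹ - 1; 0, 1] := rfl
lemma phiB3_4 (t : ℂ) : phiB3 t 4 = !![1, 0; t⁻¹ - 1, t⁻¹] := rfl
lemma phiB3_5 (t : ℂ) : phiB3 t 5 = !![1, 0; 0, t⁻¹] := rfl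
lemma phiB3_6 (t : ℂ) : phiB3 t 6 = !![0, 1; 1, 0] := rfl
lemma phiB3_7 (t : ℂ) : phiB3 t 7 = !![1, 0; -1, -1] := rfl

lemma actD (t m : ℂ) (x : Fin 4 → ℂ) :
    (kron (phiB3 t 2) (phiB3 m 2)).mulVec x
      = ![t⁻¹ * m⁻¹ * x 0, t⁻¹ * x 1, m⁻¹ * x 2, x 3] := by
  funext i
  fin_cases i <;>
    simp [kron_eq, phiB3_2, Matrix.mulVec, dotProduct, Fin.sum_univ_four]

lemma act0 (t m : ℂ) (x : Fin 4 → ℂ) :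
    (kron (phiB3 t 0) (phiB3 m 0)).mulVec x
      = ![t⁻¹ * m⁻¹ * x 0,
          t⁻¹ * (1 - m⁻¹) * x 0 + t⁻¹ * x 1,
          (1 - t⁻¹) * m⁻¹ * x 0 + m⁻¹ * x 2,
          (1 - t⁻¹) * (1 - m⁻¹) * x 0 + (1 - t⁻¹) * x 1 + (1 - m⁻¹) * x 2 + x 3] := by
  funext i
  fin_cases i <;>
    simp [kron_eq, phiB3_0, Matrix.mulVec, dotProduct, Fin.sum_univ_four] <;> ring

lemma act6 (t m : ℂ) (x : Fin 4 → ℂ) :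
    (kron (phiB3 t 6) (phiB3 m 6)).mulVec x = ![x 3, x 2, x 1, x 0] := by
  funext i
  fin_cases i <;>
    simp [kron_eq, phiB3_6, Matrix.mulVec, dotProduct, Fin.sum_univ_four]

lemma reachTop (t m : ℂ) (ht : t ≠ 0) (hm : m ≠ 0) (ht1 : t ≠ 1) (hm1 : m ≠ 1) (htm : t ≠ m)
    (S : Submodule ℂ (Fin 4 → ℂ))
    (hS : ∀ g : Fin 8, ∀ x ∈ S, (kron (phiB3 t g) (phiB3 m g)).mulVec x ∈ S)
    (w : Fin 4 → ℂ) (hw : w ∈ S) (hw1 : w 1 ≠ 0) : S = ⊤ := by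
  have hti : t⁻¹ ≠ 0 := inv_ne_zero ht
  have hmi : m⁻¹ ≠ 0 := inv_ne_zero hm
  have ha : (1 : ℂ) - m⁻¹ ≠ 0 := sub_ne_zero.mpr fun h => hm1 (inv_eq_one.mp h.symm)
  have hb : t⁻¹ - m⁻¹ ≠ 0 := sub_ne_zero.mpr fun h => htm (inv_inj.mp h)
  have hc : t⁻¹ - 1 ≠ 0 := sub_ne_zero.mpr fun h => ht1 (inv_eq_one.mp h)
  have hc' : (1 : ℂ) - t⁻¹ ≠ 0 := fun h => hc (by linear_combination -h)
  have hD := hS 2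
  -- first projection step
  have hu1 : (![0, (t⁻¹ - t⁻¹ * m⁻¹) * w 1, (m⁻¹ - t⁻¹ * m⁻¹) * w 2,
      (1 - t⁻¹ * m⁻¹) * w 3] : Fin 4 → ℂ) ∈ S := by
    have h := S.sub_mem (hD w hw) (S.smul_mem (t⁻¹ * m⁻¹) hw)
    have he : (kron (phiB3 t 2) (phiB3 m 2)).mulVec w - (t⁻¹ * m⁻¹) • w
        = ![0, (t⁻¹ - t⁻¹ * m⁻¹) * w 1, (m⁻¹ - t⁻¹ * m⁻¹) * w 2, (1 - t⁻¹ * m⁻¹) * w 3] := by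
      rw [actD]; funext i; fin_cases i <;> simp <;> ring
    rwa [he] at h
  -- second projection step
  have hu2 : (![0, (t⁻¹ - m⁻¹) * ((t⁻¹ - t⁻¹ * m⁻¹) * w 1), 0,
      (1 - m⁻¹) * ((1 - t⁻¹ * m⁻¹) * w 3)] : Fin 4 → ℂ) ∈ S := by
    have h := S.sub_mem (hD _ hu1) (S.smul_mem m⁻¹ hu1)
    have he : (kron (phiB3 t 2) (phiB3 m 2)).mulVec
          ![0, (t⁻¹ - t⁻¹ * m⁻¹) * w 1, (m⁻¹ - t⁻¹ * m⁻¹) * w 2, (1 - t⁻¹ * m⁻¹) * w 3]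
          - m⁻¹ • ![0, (t⁻¹ - t⁻¹ * m⁻¹) * w 1, (m⁻¹ - t⁻¹ * m⁻¹) * w 2, (1 - t⁻¹ * m⁻¹) * w 3]
        = ![0, (t⁻¹ - m⁻¹) * ((t⁻¹ - t⁻¹ * m⁻¹) * w 1), 0,
            (1 - m⁻¹) * ((1 - t⁻¹ * m⁻¹) * w 3)] := by
      rw [actD]; funext i; fin_cases i <;> simp <;> ring
    rwa [he] at h
  -- third projection step
  have hu3 : (![0, (t⁻¹ - 1) * ((t⁻¹ - m⁻¹) * ((t⁻¹ - t⁻¹ * m⁻¹) * w 1)), 0, 0]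
      : Fin 4 → ℂ) ∈ S := by
    have h := S.sub_mem (hD _ hu2) hu2
    have he : (kron (phiB3 t 2) (phiB3 m 2)).mulVec
          ![0, (t⁻¹ - m⁻¹) * ((t⁻¹ - t⁻¹ * m⁻¹) * w 1), 0, (1 - m⁻¹) * ((1 - t⁻¹ * m⁻¹) * w 3)]
          - ![0, (t⁻¹ - m⁻¹) * ((t⁻¹ - t⁻¹ * m⁻¹) * w 1), 0, (1 - m⁻¹) * ((1 - t⁻¹ * m⁻¹) * w 3)]
        = ![0, (t⁻¹ - 1) * ((t⁻¹ - m⁻¹) * ((t⁻¹ - t⁻¹ * m⁻¹) * w 1)), 0, 0] := by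
      rw [actD]; funext i; fin_cases i <;> simp <;> ring
    rwa [he] at h
  -- e1 ∈ S
  have hk : (t⁻¹ - 1) * ((t⁻¹ - m⁻¹) * ((t⁻¹ - t⁻¹ * m⁻¹) * w 1)) ≠ 0 := by
    apply mul_ne_zero hc
    apply mul_ne_zero hb
    apply mul_ne_zero _ hw1
    have : t⁻¹ - t⁻¹ * m⁻¹ = t⁻¹ * (1 - m⁻¹) := by ring
    rw [this]; exact mul_ne_zero hti ha
  have he1 : (![0, 1, 0, 0] : Fin 4 → ℂ) ∈ S := by
    obtain ⟨k, hkne, hu3'⟩ : ∃ k : ℂ, k ≠ 0 ∧ (![0, k, 0, 0] : Fin 4 → ℂ) ∈ S := ⟨_, hk, hu3⟩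
    have h := S.smul_mem k⁻¹ hu3'
    have he : k⁻¹ • (![0, k, 0, 0] : Fin 4 → ℂ) = ![0, 1, 0, 0] := by
      funext i; fin_cases i <;> simp [inv_mul_cancel₀ hkne]
    rwa [he] at h
  -- e3 ∈ S
  have hy : (![0, t⁻¹, 0, 1 - t⁻¹] : Fin 4 → ℂ) ∈ S := by
    have h := hS 0 _ he1
    have he : (kron (phiB3 t 0) (phiB3 m 0)).mulVec ![0, 1, 0, 0]
        = ![0, t⁻¹, 0, 1 - t⁻¹] := by
      rw [act0]; funext i; fin_cases i <;> simp
    rwa [he] at h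
  have he3 : (![0, 0, 0, 1] : Fin 4 → ℂ) ∈ S := by
    have h := S.smul_mem (1 - t⁻¹)⁻¹ (S.sub_mem hy (S.smul_mem t⁻¹ he1))
    have he : (1 - t⁻¹)⁻¹ • ((![0, t⁻¹, 0, 1 - t⁻¹] : Fin 4 → ℂ) - t⁻¹ • ![0, 1, 0, 0])
        = ![0, 0, 0, 1] := by
      funext i; fin_cases i <;> simp [inv_mul_cancel₀ hc']
    rwa [he] at h
  -- e0, e2 ∈ S
  have he0 : (![1, 0, 0, 0] : Fin 4 → ℂ) ∈ S := by
    have h := hS 6 _ he3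
    have he : (kron (phiB3 t 6) (phiB3 m 6)).mulVec ![0, 0, 0, 1] = ![1, 0, 0, 0] := by
      rw [act6]; funext i; fin_cases i <;> simp
    rwa [he] at h
  have he2 : (![0, 0, 1, 0] : Fin 4 → ℂ) ∈ S := by
    have h := hS 6 _ he1
    have he : (kron (phiB3 t 6) (phiB3 m 6)).mulVec ![0, 1, 0, 0] = ![0, 0, 1, 0] := by
      rw [act6]; funext i; fin_cases i <;> simp
    rwa [he] at h
  -- conclude
  rw [Submodule.eq_top_iff']
  intro v
  have hv : v = v 0 • ![1, 0, 0, 0] + v 1 • ![0, 1, 0, 0] + v 2 • ![0, 0, 1, 0]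
      + v 3 • (![0, 0, 0, 1] : Fin 4 → ℂ) := by
    funext i; fin_cases i <;> simp
  rw [hv]
  exact S.add_mem (S.add_mem (S.add_mem (S.smul_mem _ he0) (S.smul_mem _ he1))
    (S.smul_mem _ he2)) (S.smul_mem _ he3)

lemma spanInv (t : ℂ) (g : Fin 8) :
    ∃ d : ℂ, d • (![0, 1, -1, 0] : Fin 4 → ℂ)
      = (kron (phiB3 t g) (phiB3 t g)).mulVec ![0, 1, -1, 0] := by
  fin_cases g
  · exact ⟨t⁻¹, by funext i; fin_cases i <;>
      simp [kron_eq, phiB3_0, Matrix.mulVec, dotProduct, Fin.sum_univ_four] <;> ring⟩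
  · exact ⟨t⁻¹, by funext i; fin_cases i <;>
      simp [kron_eq, phiB3_1, Matrix.mulVec, dotProduct, Fin.sum_univ_four] <;> ring⟩
  · exact ⟨t⁻¹, by funext i; fin_cases i <;>
      simp [kron_eq, phiB3_2, Matrix.mulVec, dotProduct, Fin.sum_univ_four] <;> ring⟩
  · exact ⟨t⁻¹, by funext i; fin_cases i <;>
      simp [kron_eq, phiB3_3, Matrix.mulVec, dotProduct, Fin.sum_univ_four] <;> ring⟩
  · exact ⟨t⁻¹, by funext i; fin_cases i <;>
      simp [kron_eq, phiB3_4, Matrix.mulVec, dotProduct, Fin.sum_univ_four] <;> ring⟩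
  · exact ⟨t⁻¹, by funext i; fin_cases i <;>
      simp [kron_eq, phiB3_5, Matrix.mulVec, dotProduct, Fin.sum_univ_four] <;> ring⟩
  · exact ⟨-1, by funext i; fin_cases i <;>
      simp [kron_eq, phiB3_6, Matrix.mulVec, dotProduct, Fin.sum_univ_four] <;> ring⟩
  · exact ⟨-1, by funext i; fin_cases i <;>
      simp [kron_eq, phiB3_7, Matrix.mulVec, dotProduct, Fin.sum_univ_four] <;> ring⟩

theorem stmt15 (t m : ℂ) (ht : t ≠ 0) (hm : m ≠ 0) (ht1 : t ≠ 1) (hm1 : m ≠ 1) :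
    (∀ S : Submodule ℂ (Fin 4 → ℂ),
        (∀ g : Fin 8, ∀ x ∈ S, (kron (phiB3 t g) (phiB3 m g)).mulVec x ∈ S) →
        S = ⊥ ∨ S = ⊤)
      ↔ t ≠ m := by
  constructor
  · intro hirr hEq
    subst hEq
    have hinv : ∀ g : Fin 8, ∀ x ∈ Submodule.span ℂ {(![0, 1, -1, 0] : Fin 4 → ℂ)},
        (kron (phiB3 t g) (phiB3 t g)).mulVec x
          ∈ Submodule.span ℂ {(![0, 1, -1, 0] : Fin 4 → ℂ)} := by
      intro g x hx
      rw [Submodule.mem_span_singleton] at hx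
      obtain ⟨c, rfl⟩ := hx
      rw [Matrix.mulVec_smul]
      exact Submodule.smul_mem _ c (Submodule.mem_span_singleton.mpr (spanInv t g))
    rcases hirr _ hinv with h | h
    · have hmem : (![0, 1, -1, 0] : Fin 4 → ℂ)
          ∈ Submodule.span ℂ {(![0, 1, -1, 0] : Fin 4 → ℂ)} :=
        Submodule.mem_span_singleton_self _
      rw [h, Submodule.mem_bot] at hmem
      have := congrFun hmem 1
      simp at this
    · have hmem : (![1, 0, 0, 0] : Fin 4 → ℂ)
          ∈ Submodule.span ℂ {(![0, 1, -1, 0] : Fin 4 → ℂ)} := by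
        rw [h]; trivial
      rw [Submodule.mem_span_singleton] at hmem
      obtain ⟨c, hc⟩ := hmem
      have := congrFun hc 0
      simp at this
  · intro htm S hS
    by_cases hbot : S = ⊥
    · exact Or.inl hbot
    right
    obtain ⟨x, hxS, hx0⟩ := Submodule.exists_mem_ne_zero_of_ne_bot hbot
    have hti : t⁻¹ ≠ 0 := inv_ne_zero ht
    have ha : (1 : ℂ) - m⁻¹ ≠ 0 := sub_ne_zero.mpr fun h => hm1 (inv_eq_one.mp h.symm)
    by_cases h1 : x 1 ≠ 0
    · exact reachTop t m ht hm ht1 hm1 htm S hS x hxS h1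
    by_cases h2 : x 2 ≠ 0
    · refine reachTop t m ht hm ht1 hm1 htm S hS _ (hS 6 x hxS) ?_
      rw [act6]; simpa using h2
    push_neg at h1 h2
    by_cases h0 : x 0 ≠ 0
    · refine reachTop t m ht hm ht1 hm1 htm S hS _ (hS 0 x hxS) ?_
      rw [act0]
      simp only [Matrix.cons_val_one, Matrix.head_cons, h1, mul_zero, add_zero]
      exact mul_ne_zero (mul_ne_zero hti ha) h0
    push_neg at h0
    have h3 : x 3 ≠ 0 := by
      intro h3
      exact hx0 (by funext i; fin_cases i <;> simpa [h0, h1, h2, h3])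
    -- apply swap then generator 0
    have hwS : (![x 3, x 2, x 1, x 0] : Fin 4 → ℂ) ∈ S := by
      have h := hS 6 x hxS
      rwa [act6] at h
    refine reachTop t m ht hm ht1 hm1 htm S hS _ (hS 0 _ hwS) ?_
    rw [act0]
    simp only [Matrix.cons_val_one, Matrix.head_cons, Matrix.cons_val_zero, h2, mul_zero,
      add_zero]
    exact mul_ne_zero (mul_ne_zero hti ha) h3
end

section
/- Let t_1 ≠ 1 and t_2 ≠ 1 be nonzero complex numbers, and suppose t_3·m_3 = 1 and t_3 = m_3 (so t_3 = m_3 = ±1) and ((t_1,t_2) ≠ (m_1,m_2)) with m_1, m_2 nonzero and ≠ 1. Then no vector of the form a_2 e_2 + a_3 e_3 with a_2, a_3 both nonzero spans a one-dimensional subspace of C^4 invariant under all six matrices of the tensor product representation φ̂_G(t_1,t_2,t_3) ⊗ φ̂_G(m_1,m_2,m_3) of Cb_3. -/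
open Matrix

theorem stmt17 (t1 t2 t3 m1 m2 m3 : ℂ)
    (ht1 : t1 ≠ 0) (ht2 : t2 ≠ 0) (hm1 : m1 ≠ 0) (hm2 : m2 ≠ 0)
    (ht1' : t1 ≠ 1) (ht2' : t2 ≠ 1) (hm1' : m1 ≠ 1) (hm2' : m2 ≠ 1)
    (h3 : t3 * m3 = 1) (h3' : t3 = m3) (hne : (t1, t2) ≠ (m1, m2))
    (a2 a3 : ℂ) (ha2 : a2 ≠ 0) (ha3 : a3 ≠ 0) :
    ¬ ∀ g : Fin 6,
        (kron (phiG3 t1 t2 t3 g) (phiG3 m1 m2 m3 g)).mulVec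
            (a2 • (Pi.single 1 1 : Fin 4 → ℂ) + a3 • (Pi.single 2 1 : Fin 4 → ℂ)) ∈
          Submodule.span ℂ
            {a2 • (Pi.single 1 1 : Fin 4 → ℂ) + a3 • (Pi.single 2 1 : Fin 4 → ℂ)} := by
  intro h
  obtain ⟨c, hc⟩ := Submodule.mem_span_singleton.mp (h 0)
  obtain ⟨d, hd⟩ := Submodule.mem_span_singleton.mp (h 1)
  have e1 := congrFun hc 1
  have e2 := congrFun hc 2
  have f1 := congrFun hd 1
  have f2 := congrFun hd 2
  simp [kron, phiG3, Matrix.mulVec, dotProduct, Fin.sum_univ_four,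
    Pi.single_apply] at e1 e2 f1 f2
  replace e1 := e1.resolve_right ha2
  replace e2 := e2.resolve_right ha3
  replace f1 := f1.resolve_right ha2
  replace f2 := f2.resolve_right ha3
  apply hne
  have ht : t2 = m2 := by
    have := e1.symm.trans e2
    field_simp at this
    exact this.symm
  have ht' : t1 = m1 := by
    have := f2.symm.trans f1
    field_simp at this
    exact this.symm
  simp [ht, ht']
end
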